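/- arXiv:1108.3275 — 2 statements merged into one kernel-verified Lean document; each statement's English description precedes it below -/
import Mathlib

section
/- The center of the Lie algebra 𝔫 equals the span of T₁ and T₂. -/
/-- The bracket on ℝ⁶ (basis X₁=e0, Y₁=e1, X₂=e2, Y₂=e3, T₁=e4, T₂=e5)
determined by [X₁,Y₁]=T₁, [X₁,X₂]=[Y₁,Y₂]=T₂, all other basis brackets zero. -/
def nBracket (a b : Fin 6 → ℝ) : Fin 6 → ℝ := fun i =>
  if i = 4 then a 0 * b 1 - a 1 * b 0
  else if i = 5 then (a 0 * b 2 - a 2 * b 0) + (a 1 * b 3 - a 3 * b 1)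
  else 0

theorem Submodule.mem_span_pair_single_one_iff {R ι : Type*} [Semiring R] [DecidableEq ι]
    {i j : ι} (hij : i ≠ j) (a : ι → R) :
    a ∈ span R {Pi.single i 1, Pi.single j 1} ↔ ∀ k, k ≠ i → k ≠ j → a k = 0 := by
  rw [mem_span_pair]
  constructor
  · rintro ⟨s, t, rfl⟩ k hki hkj
    simp [hki, hkj]
  · intro h
    refine ⟨a i, a j, funext fun k => ?_⟩
    by_cases hki : k = i
    · subst hki
      simp [hij]
    by_cases hkj : k = j
    · subst hkj
      simp [hki]
    simp [hki, hkj, h k hki hkj]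

theorem forall_nBracket_eq_zero_iff (a : Fin 6 → ℝ) :
    (∀ b, nBracket a b = 0) ↔ ∀ k, k ≠ 4 → k ≠ 5 → a k = 0 := by
  constructor
  · intro h
    have h0 : a 0 = 0 := by simpa [nBracket] using congrFun (h (Pi.single 1 1)) 4
    have h1 : a 1 = 0 := by simpa [nBracket] using congrFun (h (Pi.single 0 1)) 4
    have h2 : a 2 = 0 := by simpa [nBracket] using congrFun (h (Pi.single 0 1)) 5
    have h3 : a 3 = 0 := by simpa [nBracket] using congrFun (h (Pi.single 1 1)) 5
    intro k hk4 hk5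
    fin_cases k <;> simp_all
  · intro h b
    funext i
    simp [nBracket, h 0, h 1, h 2, h 3]

theorem stmt_9 :
    {a : Fin 6 → ℝ | ∀ b : Fin 6 → ℝ, nBracket a b = 0} =
      (Submodule.span ℝ {(Pi.single 4 1 : Fin 6 → ℝ), (Pi.single 5 1 : Fin 6 → ℝ)} :
        Submodule ℝ (Fin 6 → ℝ)) := by
  ext a
  rw [Set.mem_ofPred_eq, SetLike.mem_coe, forall_nBracket_eq_zero_iff,
    Submodule.mem_span_pair_single_one_iff (by decide)]
end

section
/- For fixed λ₂ ≠ 0, the closure of the set {√μ_{+,(λ₁,λ₂)}(2m₊+1) + √μ_{-,(λ₁,λ₂)}(2m₋+1) : λ₁ ∈ ℝ, m₊,m₋ ∈ ℕ} equals the half-line [2|λ₂|, ∞). -/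
/-
The spectral parameters satisfy μ₊ μ₋ = λ₂⁴, so by AM–GM every eigenvalue is at least
√μ₊ + √μ₋ ≥ 2√(√μ₊ √μ₋) = 2|λ₂|, with equality at λ₁ = 0. Since √μ₊ ≥ |λ₁|, the lowest
eigenvalue √μ₊ + √μ₋ is a continuous function of λ₁ that is unbounded above, so by the
intermediate value theorem it already covers all of [2|λ₂|, ∞). The set is therefore this
closed half-line itself.
-/

/-- μ_{±,λ} for λ = (λ₁,λ₂), with ε = 1 or ε = -1. -/
noncomputable def muEig (eps l1 l2 : ℝ) : ℝ :=
  (1 / 2) * (l1 ^ 2 + 2 * l2 ^ 2 + eps * |l1| * Real.sqrt (l1 ^ 2 + 4 * l2 ^ 2))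

lemma muEig_one_mul_muEig_neg_one (l1 l2 : ℝ) : muEig 1 l1 l2 * muEig (-1) l1 l2 = l2 ^ 4 := by
  have hsqrt := Real.sq_sqrt (by positivity : (0 : ℝ) ≤ l1 ^ 2 + 4 * l2 ^ 2)
  unfold muEig
  nlinarith [sq_abs l1]

lemma sq_le_muEig_one (l1 l2 : ℝ) : l1 ^ 2 ≤ muEig 1 l1 l2 := by
  have hsqrt : |l1| ≤ Real.sqrt (l1 ^ 2 + 4 * l2 ^ 2) :=
    Real.abs_le_sqrt (by nlinarith [sq_nonneg l2])
  unfold muEig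
  nlinarith [sq_abs l1, mul_le_mul_of_nonneg_left hsqrt (abs_nonneg l1), sq_nonneg l2]

lemma abs_le_sqrt_muEig_one (l1 l2 : ℝ) : |l1| ≤ Real.sqrt (muEig 1 l1 l2) :=
  Real.abs_le_sqrt (sq_le_muEig_one l1 l2)

lemma sqrt_muEig_one_mul_sqrt_muEig_neg_one (l1 l2 : ℝ) :
    Real.sqrt (muEig 1 l1 l2) * Real.sqrt (muEig (-1) l1 l2) = l2 ^ 2 := by
  rw [← Real.sqrt_mul ((sq_nonneg l1).trans (sq_le_muEig_one l1 l2)),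
    muEig_one_mul_muEig_neg_one, show l2 ^ 4 = (l2 ^ 2) ^ 2 by ring,
    Real.sqrt_sq (sq_nonneg l2)]

lemma two_mul_abs_le_sqrt_muEig_add (l1 l2 : ℝ) :
    2 * |l2| ≤ Real.sqrt (muEig 1 l1 l2) + Real.sqrt (muEig (-1) l1 l2) := by
  have hprod := sqrt_muEig_one_mul_sqrt_muEig_neg_one l1 l2
  set a := Real.sqrt (muEig 1 l1 l2)
  set b := Real.sqrt (muEig (-1) l1 l2)
  have hsq : (2 * |l2|) ^ 2 ≤ (a + b) ^ 2 := by nlinarith [sq_nonneg (a - b), sq_abs l2]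
  exact abs_le_of_sq_le_sq' hsq (by positivity) |>.2

lemma sqrt_muEig_add_zero (l2 : ℝ) :
    Real.sqrt (muEig 1 0 l2) + Real.sqrt (muEig (-1) 0 l2) = 2 * |l2| := by
  have hmu (eps : ℝ) : muEig eps 0 l2 = l2 ^ 2 := by simp [muEig]
  rw [hmu, hmu, Real.sqrt_sq_eq_abs]
  ring

lemma continuous_sqrt_muEig_add (l2 : ℝ) :
    Continuous fun l1 => Real.sqrt (muEig 1 l1 l2) + Real.sqrt (muEig (-1) l1 l2) := by
  unfold muEig
  fun_prop

lemma Ici_subset_range_sqrt_muEig_add (l2 : ℝ) :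
    Set.Ici (2 * |l2|) ⊆
      Set.range fun l1 => Real.sqrt (muEig 1 l1 l2) + Real.sqrt (muEig (-1) l1 l2) := by
  intro x (hx : 2 * |l2| ≤ x)
  have hx0 : 0 ≤ x := (by positivity : (0 : ℝ) ≤ 2 * |l2|).trans hx
  have hxf : x ≤ Real.sqrt (muEig 1 x l2) + Real.sqrt (muEig (-1) x l2) := by
    have := abs_le_sqrt_muEig_one x l2
    rw [abs_of_nonneg hx0] at this
    linarith [Real.sqrt_nonneg (muEig (-1) x l2)]
  obtain ⟨l1, -, hl1⟩ := intermediate_value_Icc hx0 (continuous_sqrt_muEig_add l2).continuousOn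
    ⟨(sqrt_muEig_add_zero l2).le.trans hx, hxf⟩
  exact ⟨l1, hl1⟩

theorem stmt_18_general (l2 : ℝ) :
    closure {nu : ℝ | ∃ (l1 : ℝ) (mp mm : ℕ),
        nu = Real.sqrt (muEig 1 l1 l2) * (2 * mp + 1) +
          Real.sqrt (muEig (-1) l1 l2) * (2 * mm + 1)} =
      Set.Ici (2 * |l2|) := by
  suffices hset : {nu : ℝ | ∃ (l1 : ℝ) (mp mm : ℕ),
      nu = Real.sqrt (muEig 1 l1 l2) * (2 * mp + 1) +
        Real.sqrt (muEig (-1) l1 l2) * (2 * mm + 1)} = Set.Ici (2 * |l2|) by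
    rw [hset, closure_Ici]
  apply subset_antisymm
  · rintro nu ⟨l1, mp, mm, rfl⟩
    have hground := two_mul_abs_le_sqrt_muEig_add l1 l2
    have hp := mul_nonneg (Real.sqrt_nonneg (muEig 1 l1 l2)) (Nat.cast_nonneg (α := ℝ) mp)
    have hm := mul_nonneg (Real.sqrt_nonneg (muEig (-1) l1 l2)) (Nat.cast_nonneg (α := ℝ) mm)
    change 2 * |l2| ≤ _
    linarith
  · intro x hx
    obtain ⟨l1, hl1⟩ := Ici_subset_range_sqrt_muEig_add l2 hx
    exact ⟨l1, 0, 0, by simpa using hl1.symm⟩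

theorem stmt_18 (l2 : ℝ) (hl2 : l2 ≠ 0) :
    closure {nu : ℝ | ∃ (l1 : ℝ) (mp mm : ℕ),
        nu = Real.sqrt (muEig 1 l1 l2) * (2 * mp + 1) +
          Real.sqrt (muEig (-1) l1 l2) * (2 * mm + 1)} =
      Set.Ici (2 * |l2|) :=
  stmt_18_general l2
end
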